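/- For t ∈ ℝ, let L_t ⊆ ℂP² be the set of points [(a₁ + i a₂)e^{iπt/3} : (a₁ − i a₂)e^{iπt/3} : a₃ e^{−2iπt/3}] as (a₁, a₂, a₃) ranges over ℝ³ ∖ {0}. Then for all t₁, t₂ ∈ ℝ with t₁ − t₂ ∉ ℤ, the intersection L_{t₁} ∩ L_{t₂} equals {[0 : 0 : 1]} ∪ {[a : b : 0] : a, b ∈ ℂ, |a| = |b| ≠ 0}. -/

import Mathlib

/-!
Dividing by `e^{iπt/3}`, the points of `L_t` are the `[u : ū : r e^{-iπt}]` with `u ∈ ℂ`,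
`r ∈ ℝ` not both zero. If two such representatives for `t₁` and `t₂` are proportional and
`u, r ≠ 0`, comparing the first two coordinates shows that the factor is real, and then the
third coordinate forces `e^{iπ(t₁ - t₂)}` to be real, i.e. `t₁ - t₂ ∈ ℤ`. So a common point has
`u = 0`, giving `[0 : 0 : 1]`, or `r = 0`, giving `[u : ū : 0]`; conversely every `[a : b : 0]`
with `|a| = |b|` can be rescaled to this form.
-/

open Projectivization

/-- The representative vector of a point of `L_t`, for a real vector `a`:
`((a₁ + i a₂)e^{iπt/3}, (a₁ - i a₂)e^{iπt/3}, a₃ e^{-2iπt/3})`. -/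
noncomputable def Lvec (t : ℝ) (a : Fin 3 → ℝ) : Fin 3 → ℂ :=
  ![((a 0 : ℂ) + Complex.I * (a 1 : ℂ)) * Complex.exp (Complex.I * Real.pi * t / 3),
    ((a 0 : ℂ) - Complex.I * (a 1 : ℂ)) * Complex.exp (Complex.I * Real.pi * t / 3),
    (a 2 : ℂ) * Complex.exp (-(2 * Complex.I * Real.pi * t) / 3)]

/-- The Lagrangian `L_t ⊆ ℂP²`: the image of the standard `ℝP²` under the given loop of
isometries. -/
noncomputable def Lset (t : ℝ) : Set (Projectivization ℂ (Fin 3 → ℂ)) :=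
  {p | ∃ a : Fin 3 → ℝ, a ≠ 0 ∧ ∃ h : Lvec t a ≠ 0,
        p = Projectivization.mk ℂ (Lvec t a) h}

lemma vec001_ne_zero : (![0, 0, 1] : Fin 3 → ℂ) ≠ 0 := by
  intro h
  simpa using congrFun h 2

open Complex ComplexConjugate
open scoped Real

noncomputable def Lrep (t : ℝ) (u : ℂ) (r : ℝ) : Fin 3 → ℂ :=
  ![u, conj u, r * exp (-(π * t * I))]

lemma Lrep_eq_zero_iff {t : ℝ} {u : ℂ} {r : ℝ} : Lrep t u r = 0 ↔ u = 0 ∧ r = 0 := by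
  refine ⟨fun h => ?_, fun ⟨hu, hr⟩ => ?_⟩
  · have h0 := congrFun h 0
    have h2 := congrFun h 2
    simp only [Lrep, Matrix.cons_val, Pi.zero_apply, mul_eq_zero, exp_ne_zero, or_false,
      ofReal_eq_zero] at h0 h2
    exact ⟨h0, h2⟩
  · funext i; fin_cases i <;> simp [Lrep, hu, hr]

lemma Lrep_zero_left (t r : ℝ) : Lrep t 0 r = (r * exp (-(π * t * I))) • ![0, 0, 1] := by
  funext i; fin_cases i <;> simp [Lrep]

lemma Lvec_eq_smul_Lrep (t : ℝ) (a : Fin 3 → ℝ) :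
    Lvec t a = exp (I * π * t / 3) • Lrep t (a 0 + a 1 * I) (a 2) := by
  have hexp : exp (-(2 * I * π * t) / 3) = exp (I * π * t / 3) * exp (-(π * t * I)) := by
    rw [← exp_add]; ring_nf
  simp only [Lvec, Lrep, hexp, Matrix.smul_cons, Matrix.smul_empty, smul_eq_mul, map_add,
    map_mul, conj_ofReal, conj_I]
  ring_nf

lemma mem_Lset_iff {t : ℝ} {p : Projectivization ℂ (Fin 3 → ℂ)} :
    p ∈ Lset t ↔ ∃ u r, ∃ h : Lrep t u r ≠ 0, p = mk ℂ (Lrep t u r) h := by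
  constructor
  · rintro ⟨a, -, ha, rfl⟩
    have hrep : Lrep t (a 0 + a 1 * I) (a 2) ≠ 0 := by
      intro h0
      rw [Lvec_eq_smul_Lrep, h0, smul_zero] at ha
      exact ha rfl
    exact ⟨_, _, hrep, (mk_eq_mk_iff' ℂ _ _ ha hrep).2 ⟨_, (Lvec_eq_smul_Lrep t a).symm⟩⟩
  · rintro ⟨u, r, hrep, rfl⟩
    have hvec : Lvec t ![u.re, u.im, r] = exp (I * π * t / 3) • Lrep t u r := by
      simpa using Lvec_eq_smul_Lrep t ![u.re, u.im, r]
    have hne : Lvec t ![u.re, u.im, r] ≠ 0 := by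
      rw [hvec]; exact smul_ne_zero (exp_ne_zero _) hrep
    refine ⟨![u.re, u.im, r], fun h0 => hrep (Lrep_eq_zero_iff.2 ⟨?_, ?_⟩), hne,
      (mk_eq_mk_iff' ℂ _ _ hrep hne).2 ⟨(exp (I * π * t / 3))⁻¹, ?_⟩⟩
    · apply Complex.ext
      · simpa using congrFun h0 0
      · simpa using congrFun h0 1
    · simpa using congrFun h0 2
    · rw [hvec, inv_smul_smul₀ (exp_ne_zero _)]

lemma exists_ne_zero_conj_mul_eq_mul {a b : ℂ} (h : ‖a‖ = ‖b‖) :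
    ∃ c ≠ 0, conj (c * a) = c * b := by
  have hab : a * conj a = b * conj b := by rw [mul_conj', mul_conj', h]
  rcases eq_or_ne a 0 with rfl | ha
  · refine ⟨1, one_ne_zero, ?_⟩
    rw [norm_zero, eq_comm, norm_eq_zero] at h
    simp [h]
  -- `c = ā + b̄` works because `|a| = |b|`; when it vanishes, `c = i (ā - b̄)` does.
  by_cases hs : conj a + conj b = 0
  · refine ⟨I * (conj a - conj b), ?_, ?_⟩
    · refine mul_ne_zero I_ne_zero fun hd => ha ?_
      have : 2 * conj a = 0 := by linear_combination hs + hd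
      simpa using this
    · simp only [map_mul, map_sub, conj_I, conj_conj]
      linear_combination -I * hab
  · refine ⟨conj a + conj b, hs, ?_⟩
    simp only [map_mul, map_add, conj_conj]
    linear_combination hab

lemma mk_zero_zero_one_mem_Lset (t : ℝ) : mk ℂ ![0, 0, 1] vec001_ne_zero ∈ Lset t := by
  have hrep : Lrep t 0 1 ≠ 0 := fun h => one_ne_zero (Lrep_eq_zero_iff.1 h).2
  exact mem_Lset_iff.2 ⟨0, 1, hrep,
    ((mk_eq_mk_iff' ℂ _ _ hrep vec001_ne_zero).2 ⟨_, (Lrep_zero_left t 1).symm⟩).symm⟩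

lemma mk_mem_Lset_of_norm_eq (t : ℝ) {a b : ℂ} (h : ‖a‖ = ‖b‖) (hab : ![a, b, 0] ≠ 0) :
    mk ℂ ![a, b, 0] hab ∈ Lset t := by
  obtain ⟨c, hc, hconj⟩ := exists_ne_zero_conj_mul_eq_mul h
  have hrep : Lrep t (c * a) 0 = c • ![a, b, 0] := by
    funext i; fin_cases i <;> simp [Lrep, hconj]
  have hne : Lrep t (c * a) 0 ≠ 0 := by rw [hrep]; exact smul_ne_zero hc hab
  refine mem_Lset_iff.2 ⟨_, _, hne, (mk_eq_mk_iff' ℂ _ _ hab hne).2 ⟨c⁻¹, ?_⟩⟩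
  rw [hrep, inv_smul_smul₀ hc]

lemma exists_int_sub_eq_of_exp_eq {t₁ t₂ x y : ℝ} (hx : x ≠ 0)
    (h : x * exp (-(π * t₂ * I)) = y * exp (-(π * t₁ * I))) : ∃ n : ℤ, t₁ - t₂ = n := by
  have hy : x * exp ((π * (t₁ - t₂) : ℝ) * I) = y :=
    calc x * exp ((π * (t₁ - t₂) : ℝ) * I)
        = x * exp (-(π * t₂ * I)) * exp (π * t₁ * I) := by
          rw [mul_assoc, ← exp_add]; push_cast; ring_nf
      _ = y := by rw [h, mul_assoc, ← exp_add, neg_add_cancel, exp_zero, mul_one]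
  have hsin : Real.sin (π * (t₁ - t₂)) = 0 := by
    simpa only [im_ofReal_mul, exp_ofReal_mul_I_im, ofReal_im, mul_eq_zero, hx, false_or]
      using congrArg im hy
  obtain ⟨n, hn⟩ := Real.sin_eq_zero_iff.1 hsin
  exact ⟨n, mul_left_cancel₀ Real.pi_ne_zero (by rw [← hn]; ring)⟩

lemma eq_zero_of_smul_Lrep_eq {t₁ t₂ : ℝ} (h : ∀ n : ℤ, t₁ - t₂ ≠ n) {c u v : ℂ} {r s : ℝ}
    (hc : c • Lrep t₂ v s = Lrep t₁ u r) (hr : r ≠ 0) : u = 0 := by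
  have h0 := congrFun hc 0
  have h1 := congrFun hc 1
  have h2 := congrFun hc 2
  simp only [Lrep, Pi.smul_apply, smul_eq_mul, Matrix.cons_val] at h0 h1 h2
  by_contra hu
  have hv : conj v ≠ 0 := by
    rw [map_ne_zero]
    rintro rfl
    exact hu (by rw [← h0, mul_zero])
  have hreal : conj c = c :=
    mul_right_cancel₀ hv (by rw [← map_mul, h0, h1])
  obtain ⟨x, rfl⟩ := conj_eq_iff_real.1 hreal
  have hxs : ((x * s : ℝ) : ℂ) * exp (-(π * t₂ * I)) = r * exp (-(π * t₁ * I)) := by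
    rw [← h2]; push_cast; ring
  have hxs0 : x * s ≠ 0 := by
    rintro h0
    rw [h0, ofReal_zero, zero_mul, eq_comm, mul_eq_zero] at hxs
    exact hxs.elim (ofReal_ne_zero.2 hr) (exp_ne_zero _)
  obtain ⟨n, hn⟩ := exists_int_sub_eq_of_exp_eq hxs0 hxs
  exact h n hn

/-- For `t₁ - t₂ ∉ ℤ`, the intersection `L_{t₁} ∩ L_{t₂}` consists of the single point
`[0:0:1]` together with the circle `{[a : b : 0] : |a| = |b| ≠ 0}`. -/
theorem Lset_inter_Lset (t₁ t₂ : ℝ) (h : ∀ n : ℤ, t₁ - t₂ ≠ (n : ℝ)) :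
    Lset t₁ ∩ Lset t₂ =
      {p | p = Projectivization.mk ℂ ![0, 0, 1] vec001_ne_zero} ∪
      {p | ∃ a b : ℂ, ‖a‖ = ‖b‖ ∧ ‖b‖ ≠ 0 ∧
            ∃ hab : (![a, b, 0] : Fin 3 → ℂ) ≠ 0,
              p = Projectivization.mk ℂ ![a, b, 0] hab} := by
  ext p
  constructor
  · rintro ⟨hp₁, hp₂⟩
    obtain ⟨u, r, hur, rfl⟩ := mem_Lset_iff.1 hp₁
    obtain ⟨v, s, hvs, hp⟩ := mem_Lset_iff.1 hp₂
    obtain ⟨c, hc⟩ := (mk_eq_mk_iff' ℂ _ _ hur hvs).1 hp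
    by_cases hr : r = 0
    · subst hr
      have hu : u ≠ 0 := fun hu => hur (Lrep_eq_zero_iff.2 ⟨hu, rfl⟩)
      have hrep : Lrep t₁ u 0 = ![u, conj u, 0] := by simp [Lrep]
      exact Or.inr ⟨u, conj u, (norm_conj u).symm, by simpa using hu, hrep ▸ hur,
        by simp_rw [hrep]⟩
    · obtain rfl := eq_zero_of_smul_Lrep_eq h hc hr
      exact Or.inl ((mk_eq_mk_iff' ℂ _ _ hur vec001_ne_zero).2 ⟨_, (Lrep_zero_left t₁ r).symm⟩)
  · rintro (rfl | ⟨a, b, hab, -, hne, rfl⟩)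
    · exact ⟨mk_zero_zero_one_mem_Lset t₁, mk_zero_zero_one_mem_Lset t₂⟩
    · exact ⟨mk_mem_Lset_of_norm_eq t₁ hab hne, mk_mem_Lset_of_norm_eq t₂ hab hne⟩
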